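/- (Polyak–Łojasiewicz inequality for the barycenter functional.) Let 0 < λ_min ≤ λ_max < ∞, κ := λ_max/λ_min, and suppose Σ₁, …, Σ_N ∈ 𝒦_{λ_min,λ_max}. Let Σ⋆ be a minimizer of the barycenter functional F over all d×d symmetric positive definite matrices. Then for every Σ ∈ 𝒦_{λ_min,λ_max}, F(Σ) − F(Σ⋆) ≤ 2 κ^{3/2} · ‖∇F(Σ)‖_Σ². -/

import Mathlib

open Matrix
open scoped Classical

/-- Symmetric PSD square root of a positive semidefinite matrix (junk value `0` otherwise). -/
noncomputable def msqrt {d : ℕ} (M : Matrix (Fin d) (Fin d) ℝ) : Matrix (Fin d) (Fin d) ℝ :=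
  if h : M.PosSemidef then
    (h.1.eigenvectorUnitary : Matrix (Fin d) (Fin d) ℝ) * diagonal (Real.sqrt ∘ h.1.eigenvalues) *
      (star h.1.eigenvectorUnitary : Matrix (Fin d) (Fin d) ℝ)
  else 0

/-- Optimal transport map `T_{A→B} = A^{-1/2} (A^{1/2} B A^{1/2})^{1/2} A^{-1/2}`. -/
noncomputable def Tmap {d : ℕ} (A B : Matrix (Fin d) (Fin d) ℝ) : Matrix (Fin d) (Fin d) ℝ :=
  (msqrt A)⁻¹ * msqrt (msqrt A * B * msqrt A) * (msqrt A)⁻¹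

/-- Squared Bures–Wasserstein distance `tr(A + B - 2 (A^{1/2} B A^{1/2})^{1/2})`. -/
noncomputable def W2sq {d : ℕ} (A B : Matrix (Fin d) (Fin d) ℝ) : ℝ :=
  (A + B - (2 : ℝ) • msqrt (msqrt A * B * msqrt A)).trace

/-- Bures–Wasserstein distance. -/
noncomputable def W2 {d : ℕ} (A B : Matrix (Fin d) (Fin d) ℝ) : ℝ :=
  Real.sqrt (W2sq A B)

/-- Smallest eigenvalue of a (hermitian) matrix. -/
noncomputable def lamMin {d : ℕ} (M : Matrix (Fin d) (Fin d) ℝ) : ℝ :=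
  if h : M.IsHermitian then ⨅ i, h.eigenvalues i else 0

/-- Largest eigenvalue of a (hermitian) matrix. -/
noncomputable def lamMax {d : ℕ} (M : Matrix (Fin d) (Fin d) ℝ) : ℝ :=
  if h : M.IsHermitian then ⨆ i, h.eigenvalues i else 0

/-- `Kset a b` : symmetric positive definite matrices with all eigenvalues in `[a, b]`,
expressed via the Loewner order `a • I ⪯ S ⪯ b • I`. -/
def Kset {d : ℕ} (a b : ℝ) : Set (Matrix (Fin d) (Fin d) ℝ) :=
  {S | S.PosDef ∧ (S - a • (1 : Matrix (Fin d) (Fin d) ℝ)).PosSemidef ∧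
    (b • (1 : Matrix (Fin d) (Fin d) ℝ) - S).PosSemidef}

/-- Barycenter functional `F(S) = (1/(2N)) ∑ᵢ W₂²(S, Σᵢ)`. -/
noncomputable def Fbar {d N : ℕ} (Ss : Fin N → Matrix (Fin d) (Fin d) ℝ)
    (S : Matrix (Fin d) (Fin d) ℝ) : ℝ :=
  (1 / (2 * (N : ℝ))) * ∑ i, W2sq S (Ss i)

/-- Bures–Wasserstein gradient of the barycenter functional: `I - (1/N) ∑ᵢ T_{S→Σᵢ}`. -/
noncomputable def gradF {d N : ℕ} (Ss : Fin N → Matrix (Fin d) (Fin d) ℝ)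
    (S : Matrix (Fin d) (Fin d) ℝ) : Matrix (Fin d) (Fin d) ℝ :=
  1 - (N : ℝ)⁻¹ • ∑ i, Tmap S (Ss i)

/-- `‖A‖_S² = tr(A S A)`. -/
noncomputable def normAtSq {d : ℕ} (A S : Matrix (Fin d) (Fin d) ℝ) : ℝ :=
  (A * S * A).trace


/-!
At a minimizer `Σ⋆` the gradient vanishes, i.e. the transport maps `T_{Σ⋆→Σᵢ}` average to the
identity (perturb `Σ⋆` to `X Σ⋆ X` with `X = 1 - ε ∇F(Σ⋆)`). Averaging then forces
`Σ⋆ ⪯ λ_max`, hence `T_{Σ⋆→Σᵢ} ⪰ κ^{-1/2}`. Composing transport maps gives a three-point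
inequality for `W₂²(·, B)`: it lies above its linearization at `A`, with margin `α W₂²(·, A)`
when `T_{A→B} ⪰ α`. Summed over `i`, this yields quadratic growth
`F(Σ) - F(Σ⋆) ≥ κ^{-1/2} W₂²(Σ, Σ⋆) / 2` at `A = Σ⋆`, and convexity
`F(Σ) - F(Σ⋆) ≤ tr((Σ - Σ⋆) ∇F(Σ)) / 2` at `A = Σ` (margin `0`). Cauchy–Schwarz in the
`Σ`-weighted trace inner product bounds the last trace by `2 √κ W₂(Σ, Σ⋆) ‖∇F(Σ)‖_Σ`, and
eliminating `W₂(Σ, Σ⋆)` between the two bounds gives the constant `2 κ^{3/2}`.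
-/

open Filter Topology

namespace Matrix

section General

variable {m n : Type*} [Fintype m] [Fintype n]

theorem PosSemidef.dotProduct_mulVec_sq_le {S : Matrix n n ℝ} (hS : S.PosSemidef) (x y : n → ℝ) :
    (x ⬝ᵥ (S *ᵥ y)) ^ 2 ≤ (x ⬝ᵥ (S *ᵥ x)) * (y ⬝ᵥ (S *ᵥ y)) := by
  let := S.toSeminormedAddCommGroup hS
  let := S.toInnerProductSpace hS
  have hinner (a b : n → ℝ) : inner ℝ a b = a ⬝ᵥ (S *ᵥ b) := by
    change (S *ᵥ b) ⬝ᵥ star a = _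
    rw [dotProduct_comm, star_trivial]
  simpa only [hinner, sq] using real_inner_mul_inner_self_le x y

theorem PosSemidef.trace_mul_mul_conjTranspose_sq_le {P : Matrix n n ℝ} (hP : P.PosSemidef)
    (X Y : Matrix n n ℝ) :
    (X * P * Yᴴ).trace ^ 2 ≤ (X * P * Xᴴ).trace * (Y * P * Yᴴ).trace := by
  let := P.toMatrixSeminormedAddCommGroup hP
  let := P.toMatrixInnerProductSpace hP
  rw [sq, mul_comm (X * P * Xᴴ).trace]
  exact real_inner_mul_inner_self_le Y X

theorem IsHermitian.mulVec_dotProduct {M : Matrix n n ℝ} (hM : M.IsHermitian) (x y : n → ℝ) :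
    (M *ᵥ x) ⬝ᵥ y = x ⬝ᵥ (M *ᵥ y) := by
  rw [dotProduct_comm, dotProduct_mulVec, ← mulVec_transpose,
    ← conjTranspose_eq_transpose_of_trivial, hM.eq, dotProduct_comm]

variable [DecidableEq n]

theorem PosDef.isUnit_det {M : Matrix n n ℝ} (hM : M.PosDef) : IsUnit M.det :=
  (isUnit_iff_isUnit_det M).mp hM.isUnit

theorem trace_conjTranspose_mul_le_trace_mul {A T : Matrix n n ℝ} (hT : T.PosDef)
    {P Q : Matrix m n ℝ} (hP : Pᴴ * P = A) (hQ : Qᴴ * Q = T * A * T) :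
    (Pᴴ * Q).trace ≤ (A * T).trace := by
  -- `0 ≤ tr((P - Q T⁻¹) T (P - Q T⁻¹)ᴴ)`, and the right-hand side is `2 tr(A T) - 2 tr(Pᴴ Q)`.
  have hTT : T * T⁻¹ = 1 := mul_nonsing_inv T hT.isUnit_det
  have hTT' : T⁻¹ * T = 1 := nonsing_inv_mul T hT.isUnit_det
  have hnonneg := (hT.posSemidef.mul_mul_conjTranspose_same (P - Q * T⁻¹)).trace_nonneg
  have hexpand : (P - Q * T⁻¹) * T * (P - Q * T⁻¹)ᴴ
      = P * T * Pᴴ - P * Qᴴ - Q * Pᴴ + Q * T⁻¹ * Qᴴ := by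
    have hcancel : P * T * (T⁻¹ * Qᴴ) = P * Qᴴ := by
      rw [Matrix.mul_assoc, ← Matrix.mul_assoc T, hTT, Matrix.one_mul]
    rw [conjTranspose_sub, conjTranspose_mul, conjTranspose_nonsing_inv, hT.isHermitian.eq,
      Matrix.sub_mul, Matrix.mul_assoc Q, hTT', Matrix.mul_one, Matrix.sub_mul, Matrix.mul_sub,
      Matrix.mul_sub, hcancel, Matrix.mul_assoc Q]
    abel
  have h1 : (P * T * Pᴴ).trace = (A * T).trace := by
    rw [trace_mul_cycle, ← hP]
  have h2 : (Q * T⁻¹ * Qᴴ).trace = (A * T).trace := by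
    rw [trace_mul_cycle, hQ, Matrix.mul_assoc, hTT, Matrix.mul_one, trace_mul_comm]
  have h3 : (P * Qᴴ).trace = (Pᴴ * Q).trace := by
    have := trace_conjTranspose (Pᴴ * Q)
    rw [conjTranspose_mul, conjTranspose_conjTranspose, star_trivial] at this
    rw [trace_mul_comm, this]
  have h4 : (Q * Pᴴ).trace = (Pᴴ * Q).trace := trace_mul_comm _ _
  rw [hexpand, trace_add, trace_sub, trace_sub, h1, h2, h3, h4] at hnonneg
  linarith

theorem dotProduct_smul_one_mulVec (c : ℝ) (x : n → ℝ) :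
    x ⬝ᵥ ((c • 1 : Matrix n n ℝ) *ᵥ x) = c * (x ⬝ᵥ x) := by
  rw [smul_mulVec, one_mulVec, dotProduct_smul, smul_eq_mul]

theorem le_dotProduct_mulVec_of_posSemidef_sub_smul_one {M : Matrix n n ℝ} {c : ℝ}
    (h : (M - c • 1).PosSemidef) (x : n → ℝ) : c * (x ⬝ᵥ x) ≤ x ⬝ᵥ (M *ᵥ x) := by
  have := h.dotProduct_mulVec_nonneg x
  rw [star_trivial, sub_mulVec, dotProduct_sub, dotProduct_smul_one_mulVec] at this
  linarith

theorem dotProduct_mulVec_le_of_posSemidef_smul_one_sub {M : Matrix n n ℝ} {c : ℝ}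
    (h : (c • 1 - M).PosSemidef) (x : n → ℝ) : x ⬝ᵥ (M *ᵥ x) ≤ c * (x ⬝ᵥ x) := by
  have := h.dotProduct_mulVec_nonneg x
  rw [star_trivial, sub_mulVec, dotProduct_sub, dotProduct_smul_one_mulVec] at this
  linarith

theorem posSemidef_sub_smul_one_of_le_dotProduct_mulVec {M : Matrix n n ℝ} (hM : M.IsHermitian)
    {c : ℝ} (h : ∀ x, c * (x ⬝ᵥ x) ≤ x ⬝ᵥ (M *ᵥ x)) : (M - c • 1).PosSemidef := by
  refine PosSemidef.of_dotProduct_mulVec_nonneg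
    (hM.sub (isHermitian_one.smul (star_trivial c))) fun x => ?_
  rw [star_trivial, sub_mulVec, dotProduct_sub, dotProduct_smul_one_mulVec, sub_nonneg]
  exact h x

theorem posSemidef_smul_one_sub_of_dotProduct_mulVec_le {M : Matrix n n ℝ} (hM : M.IsHermitian)
    {c : ℝ} (h : ∀ x, x ⬝ᵥ (M *ᵥ x) ≤ c * (x ⬝ᵥ x)) : (c • 1 - M).PosSemidef := by
  refine PosSemidef.of_dotProduct_mulVec_nonneg
    ((isHermitian_one.smul (star_trivial c)).sub hM) fun x => ?_
  rw [star_trivial, sub_mulVec, dotProduct_sub, dotProduct_smul_one_mulVec, sub_nonneg]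
  exact h x

theorem PosDef.posSemidef_sub_sqrt_smul_one_of_mul_mul_eq {T A B : Matrix n n ℝ} (hT : T.PosDef)
    (hTAT : T * A * T = B) {l u : ℝ} (hl : 0 < l) (hu : 0 < u) (hA : (u • 1 - A).PosSemidef)
    (hB : (B - l • 1).PosSemidef) : (T - √(l / u) • 1).PosSemidef := by
  refine posSemidef_sub_smul_one_of_le_dotProduct_mulVec hT.isHermitian fun x => ?_
  -- With `y = T⁻¹ x`: `‖y‖² ≤ (u/l) ‖x‖²` from the hypotheses, and `‖x‖⁴ ≤ ⟪x, y⟫ ⟪x, T x⟫` is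
  -- Cauchy–Schwarz for the inner product defined by `T`.
  set y := T⁻¹ *ᵥ x
  have hTy : T *ᵥ y = x := by rw [mulVec_mulVec, mul_nonsing_inv _ hT.isUnit_det, one_mulVec]
  have hy : l * (y ⬝ᵥ y) ≤ u * (x ⬝ᵥ x) := by
    have hBA : y ⬝ᵥ (B *ᵥ y) = x ⬝ᵥ (A *ᵥ x) := by
      rw [← hTAT, ← mulVec_mulVec, ← mulVec_mulVec, hTy, ← hT.isHermitian.mulVec_dotProduct, hTy]
    linarith [le_dotProduct_mulVec_of_posSemidef_sub_smul_one hB y,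
      dotProduct_mulVec_le_of_posSemidef_smul_one_sub hA x]
  have hxy : (x ⬝ᵥ y) ^ 2 ≤ (x ⬝ᵥ x) * (y ⬝ᵥ y) := by
    simpa only [one_mulVec] using PosSemidef.one.dotProduct_mulVec_sq_le x y
  have hxx : (x ⬝ᵥ x) ^ 2 ≤ (x ⬝ᵥ y) * (x ⬝ᵥ (T *ᵥ x)) := by
    have := hT.posSemidef.dotProduct_mulVec_sq_le y x
    rwa [← hT.isHermitian.mulVec_dotProduct, hTy, dotProduct_comm y] at this
  have hx0 : 0 ≤ x ⬝ᵥ x := by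
    simpa only [one_mulVec, star_trivial] using PosSemidef.one.dotProduct_mulVec_nonneg x
  have hr0 : 0 ≤ x ⬝ᵥ (T *ᵥ x) := by
    simpa only [star_trivial] using hT.posSemidef.dotProduct_mulVec_nonneg x
  set c := √(l / u)
  have hc0 : 0 ≤ c := Real.sqrt_nonneg _
  have hcy : c ^ 2 * (y ⬝ᵥ y) ≤ x ⬝ᵥ x := by
    have hc : c ^ 2 * u = l := by rw [Real.sq_sqrt (by positivity), div_mul_cancel₀ _ hu.ne']
    refine le_of_mul_le_mul_left ?_ hu
    rwa [← mul_assoc, mul_comm u, hc]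
  have hcxy : c * (x ⬝ᵥ y) ≤ x ⬝ᵥ x := by
    nlinarith [mul_le_mul_of_nonneg_left hxy (sq_nonneg c), mul_le_mul_of_nonneg_left hcy hx0]
  rcases hx0.eq_or_lt with hx | hx
  · rw [← hx, mul_zero]
    exact hr0
  · nlinarith [mul_le_mul_of_nonneg_left hxx hc0, mul_le_mul_of_nonneg_right hcxy hr0]

theorem exists_pos_lt_one_isUnit_one_sub_smul (E : Matrix n n ℝ) :
    ∃ ε : ℝ, 0 < ε ∧ ε < 1 ∧ IsUnit (1 - ε • E) := by
  have hdet : ∀ᶠ ε in 𝓝 (0 : ℝ), (1 - ε • E).det ≠ 0 :=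
    (show Continuous fun ε : ℝ => (1 - ε • E).det by fun_prop).continuousAt.eventually_ne
      (by simp)
  have hdet' : ∀ᶠ ε in 𝓝[>] (0 : ℝ), (1 - ε • E).det ≠ 0 ∧ ε ∈ Set.Ioo 0 1 :=
    (hdet.filter_mono nhdsWithin_le_nhds).and (Ioo_mem_nhdsGT one_pos)
  obtain ⟨ε, hε, hε01⟩ := hdet'.exists
  exact ⟨ε, hε01.1, hε01.2, (isUnit_iff_isUnit_det _).mpr (isUnit_iff_ne_zero.mpr hε)⟩

end General

end Matrix

section BuresWasserstein

variable {d : ℕ}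

local notation "Mat" => Matrix (Fin d) (Fin d) ℝ

theorem msqrt_posSemidef {M : Mat} (hM : M.PosSemidef) : (msqrt M).PosSemidef := by
  have hD : (diagonal (Real.sqrt ∘ hM.1.eigenvalues)).PosSemidef :=
    PosSemidef.diagonal fun i => Real.sqrt_nonneg _
  rw [msqrt, dif_pos hM]
  simpa only [Unitary.coe_star, star_eq_conjTranspose] using
    hD.mul_mul_conjTranspose_same (hM.1.eigenvectorUnitary : Mat)

theorem msqrt_mul_self {M : Mat} (hM : M.PosSemidef) : msqrt M * msqrt M = M := by
  set U : Mat := ↑hM.1.eigenvectorUnitary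
  set D := diagonal (Real.sqrt ∘ hM.1.eigenvalues)
  have hU : star U * U = 1 := Unitary.coe_star_mul_self _
  have hD : D * D = diagonal hM.1.eigenvalues := by
    rw [diagonal_mul_diagonal]
    exact congrArg diagonal (funext fun i => Real.mul_self_sqrt (hM.eigenvalues_nonneg i))
  rw [msqrt, dif_pos hM]
  calc U * D * star U * (U * D * star U) = U * (D * (star U * U) * D) * star U := by
        simp only [Matrix.mul_assoc]
    _ = M := by
      rw [hU, Matrix.mul_one, hD]
      conv_rhs => rw [hM.1.spectral_theorem]
      simp [U]

theorem msqrt_posDef {M : Mat} (hM : M.PosDef) : (msqrt M).PosDef := by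
  refine (msqrt_posSemidef hM.posSemidef).posDef_iff_det_ne_zero.mpr fun h => hM.det_pos.ne' ?_
  rw [← msqrt_mul_self hM.posSemidef, det_mul, h, mul_zero]

theorem Tmap_posDef {A B : Mat} (hA : A.PosDef) (hB : B.PosDef) : (Tmap A B).PosDef := by
  have hs := msqrt_posDef hA
  have hinner : (msqrt A * B * msqrt A).PosDef := by
    simpa only [star_eq_conjTranspose, hs.isHermitian.eq] using
      (IsUnit.posDef_star_left_conjugate_iff hs.isUnit).mpr hB
  simpa only [Tmap, star_eq_conjTranspose, conjTranspose_nonsing_inv, hs.isHermitian.eq] using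
    (IsUnit.posDef_star_left_conjugate_iff (isUnit_nonsing_inv_iff.mpr hs.isUnit)).mpr
      (msqrt_posDef hinner)

theorem Tmap_mul_mul_Tmap {A B : Mat} (hA : A.PosDef) (hB : B.PosDef) :
    Tmap A B * A * Tmap A B = B := by
  have hs := (msqrt_posDef hA).isUnit_det
  have hsBs : (msqrt A * B * msqrt A).PosSemidef := by
    simpa only [(msqrt_posDef hA).isHermitian.eq] using
      hB.posSemidef.conjTranspose_mul_mul_same (msqrt A)
  have hM := msqrt_mul_self hsBs
  have hA' := (msqrt_mul_self hA.posSemidef).symm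
  rw [Tmap]
  set s := msqrt A
  set M := msqrt (s * B * s)
  conv_lhs => rw [hA']
  simp only [Matrix.mul_assoc, nonsing_inv_mul_cancel_left _ _ hs,
    mul_nonsing_inv_cancel_left _ _ hs]
  rw [← Matrix.mul_assoc M M, hM]
  simp only [Matrix.mul_assoc, nonsing_inv_mul_cancel_left _ _ hs, mul_nonsing_inv _ hs,
    Matrix.mul_one]

theorem trace_mul_Tmap {A : Mat} (hA : A.PosDef) (B : Mat) :
    (A * Tmap A B).trace = (msqrt (msqrt A * B * msqrt A)).trace := by
  have hs := (msqrt_posDef hA).isUnit_det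
  have hA' := (msqrt_mul_self hA.posSemidef).symm
  rw [Tmap]
  set s := msqrt A
  conv_lhs => rw [hA']
  simp only [Matrix.mul_assoc, mul_nonsing_inv_cancel_left _ _ hs]
  rw [trace_mul_comm, Matrix.mul_assoc, nonsing_inv_mul _ hs, Matrix.mul_one]

theorem W2sq_eq {A : Mat} (hA : A.PosDef) (B : Mat) :
    W2sq A B = A.trace + B.trace - 2 * (A * Tmap A B).trace := by
  rw [W2sq, trace_sub, trace_add, trace_smul, trace_mul_Tmap hA, smul_eq_mul]

theorem W2sq_eq_trace_one_sub_Tmap {A B : Mat} (hA : A.PosDef) (hB : B.PosDef) :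
    W2sq A B = ((1 - Tmap A B) * A * (1 - Tmap A B)).trace := by
  have hexpand : (1 - Tmap A B) * A * (1 - Tmap A B)
      = A - Tmap A B * A - A * Tmap A B + Tmap A B * A * Tmap A B := by noncomm_ring
  rw [hexpand, Tmap_mul_mul_Tmap hA hB, trace_add, trace_sub, trace_sub,
    trace_mul_comm (Tmap A B), W2sq_eq hA]
  ring

theorem W2sq_nonneg {A B : Mat} (hA : A.PosDef) (hB : B.PosDef) : 0 ≤ W2sq A B := by
  have h1T : (1 - Tmap A B)ᴴ = 1 - Tmap A B := by
    rw [conjTranspose_sub, conjTranspose_one, (Tmap_posDef hA hB).isHermitian.eq]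
  have := (hA.posSemidef.conjTranspose_mul_mul_same (1 - Tmap A B)).trace_nonneg
  rwa [h1T, ← W2sq_eq_trace_one_sub_Tmap hA hB] at this

/-- `(P, Q)` models a coupling of `𝒩(0, A)` and `𝒩(0, B)`, namely the law of `(Pᵀ z, Qᵀ z)` for a
standard Gaussian `z`. -/
theorem W2sq_le_trace_conjTranspose_mul_self {m : Type*} [Fintype m] {A B : Mat}
    (hA : A.PosDef) (hB : B.PosDef) {P Q : Matrix m (Fin d) ℝ} (hP : Pᴴ * P = A)
    (hQ : Qᴴ * Q = B) : W2sq A B ≤ ((P - Q)ᴴ * (P - Q)).trace := by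
  have hduality := trace_conjTranspose_mul_le_trace_mul (Tmap_posDef hA hB) hP
    (hQ.trans (Tmap_mul_mul_Tmap hA hB).symm)
  have hsymm : (Qᴴ * P).trace = (Pᴴ * Q).trace := by
    rw [← trace_transpose, transpose_mul, ← conjTranspose_eq_transpose_of_trivial,
      ← conjTranspose_eq_transpose_of_trivial, conjTranspose_conjTranspose]
  rw [conjTranspose_sub, Matrix.sub_mul, Matrix.mul_sub, Matrix.mul_sub, trace_sub, trace_sub,
    trace_sub, hP, hQ, hsymm, W2sq_eq hA]
  linarith

theorem W2sq_mul_mul_le {A B X : Mat} (hA : A.PosDef) (hB : B.PosDef) (hX : X.IsHermitian)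
    (hXAX : (X * A * X).PosDef) :
    W2sq (X * A * X) B ≤ ((X - Tmap A B) * A * (X - Tmap A B)).trace := by
  have hs : (msqrt A)ᴴ = msqrt A := (msqrt_posDef hA).isHermitian.eq
  have hsandwich (Y : Mat) (hY : Yᴴ = Y) : (msqrt A * Y)ᴴ * (msqrt A * Y) = Y * A * Y := by
    rw [conjTranspose_mul, hs, hY, Matrix.mul_assoc, ← Matrix.mul_assoc (msqrt A),
      msqrt_mul_self hA.posSemidef, Matrix.mul_assoc]
  have hT : (Tmap A B)ᴴ = Tmap A B := (Tmap_posDef hA hB).isHermitian.eq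
  have hXT : (X - Tmap A B)ᴴ = X - Tmap A B := by rw [conjTranspose_sub, hX.eq, hT]
  have := W2sq_le_trace_conjTranspose_mul_self hXAX hB (hsandwich X hX.eq)
    ((hsandwich _ hT).trans (Tmap_mul_mul_Tmap hA hB))
  rwa [← Matrix.mul_sub, hsandwich _ hXT] at this

theorem W2sq_one_sub_smul_mul_mul_le {S B E : Mat} (hS : S.PosDef) (hB : B.PosDef)
    (hE : E.IsHermitian) {ε : ℝ} (hX : ((1 - ε • E) * S * (1 - ε • E)).PosDef) :
    W2sq ((1 - ε • E) * S * (1 - ε • E)) B ≤ W2sq S B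
      - 2 * ε * (E * S * (1 - Tmap S B)).trace + ε ^ 2 * (E * S * E).trace := by
  have hcoupling := W2sq_mul_mul_le hS hB (isHermitian_one.sub (hE.smul (star_trivial ε))) hX
  rw [W2sq_eq_trace_one_sub_Tmap hS hB]
  set T := Tmap S B
  have h1T : (1 - T)ᴴ = 1 - T := by
    rw [conjTranspose_sub, conjTranspose_one, (Tmap_posDef hS hB).isHermitian.eq]
  have hexpand : (1 - ε • E - T) * S * (1 - ε • E - T) = (1 - T) * S * (1 - T)
      - ε • (E * S * (1 - T)) - ε • ((1 - T) * S * E) + ε ^ 2 • (E * S * E) := by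
    simp only [Matrix.sub_mul, Matrix.mul_sub, Matrix.smul_mul, Matrix.mul_smul, smul_sub,
      smul_smul, sq]
    abel
  have hsymm : ((1 - T) * S * E).trace = (E * S * (1 - T)).trace := by
    rw [← star_trivial (E * S * (1 - T)).trace, ← trace_conjTranspose, conjTranspose_mul,
      conjTranspose_mul, h1T, hS.isHermitian.eq, hE.eq, Matrix.mul_assoc]
  rw [hexpand, trace_add, trace_sub, trace_sub, trace_smul, trace_smul, trace_smul, hsymm]
    at hcoupling
  simp only [smul_eq_mul] at hcoupling
  linarith

/-- The displacement `√C (T_{A→B} - T_{C→B}) T_{A→B}⁻¹` of the coupling of `C` with `A` obtained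
by following `T_{C→B}` and then `T_{A→B}⁻¹`. -/
noncomputable def detour (A B C : Mat) : Mat :=
  msqrt C * (Tmap A B - Tmap C B) * (Tmap A B)⁻¹

theorem W2sq_le_trace_detour {A B C : Mat} (hA : A.PosDef) (hB : B.PosDef) (hC : C.PosDef) :
    W2sq C A ≤ ((detour A B C)ᴴ * detour A B C).trace := by
  have hTAT := Tmap_mul_mul_Tmap hA hB
  have hRCR := Tmap_mul_mul_Tmap hC hB
  have hTu := (Tmap_posDef hA hB).isUnit_det
  have hT : (Tmap A B)ᴴ = Tmap A B := (Tmap_posDef hA hB).isHermitian.eq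
  have hR : (Tmap C B)ᴴ = Tmap C B := (Tmap_posDef hC hB).isHermitian.eq
  have hs : (msqrt C)ᴴ = msqrt C := (msqrt_posDef hC).isHermitian.eq
  have hs2 := msqrt_mul_self hC.posSemidef
  rw [detour]
  set T := Tmap A B
  set R := Tmap C B
  have hQ : (msqrt C * R * T⁻¹)ᴴ * (msqrt C * R * T⁻¹) = A := by
    rw [conjTranspose_mul, conjTranspose_mul, hs, hR, conjTranspose_nonsing_inv, hT]
    calc T⁻¹ * (R * msqrt C) * (msqrt C * R * T⁻¹) = T⁻¹ * (R * (msqrt C * msqrt C) * R) * T⁻¹ := by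
          simp only [Matrix.mul_assoc]
      _ = A := by
        rw [hs2, hRCR, ← hTAT]
        simp only [Matrix.mul_assoc, nonsing_inv_mul_cancel_left _ _ hTu, mul_nonsing_inv _ hTu,
          Matrix.mul_one]
  have hPQ : msqrt C - msqrt C * R * T⁻¹ = msqrt C * (T - R) * T⁻¹ := by
    rw [Matrix.mul_sub, Matrix.sub_mul, mul_nonsing_inv_cancel_right _ _ hTu]
  have := W2sq_le_trace_conjTranspose_mul_self hC hA (by rw [hs, hs2]) hQ
  rwa [hPQ] at this

theorem trace_Tmap_mul_detour {A B C : Mat} (hA : A.PosDef) (hB : B.PosDef) (hC : C.PosDef) :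
    (Tmap A B * ((detour A B C)ᴴ * detour A B C)).trace
      = (C * Tmap A B).trace - 2 * (C * Tmap C B).trace + (A * Tmap A B).trace := by
  have hTAT := Tmap_mul_mul_Tmap hA hB
  have hRCR := Tmap_mul_mul_Tmap hC hB
  have hTu := (Tmap_posDef hA hB).isUnit_det
  have hT : (Tmap A B)ᴴ = Tmap A B := (Tmap_posDef hA hB).isHermitian.eq
  have hR : (Tmap C B)ᴴ = Tmap C B := (Tmap_posDef hC hB).isHermitian.eq
  have hs : (msqrt C)ᴴ = msqrt C := (msqrt_posDef hC).isHermitian.eq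
  have hs2 := msqrt_mul_self hC.posSemidef
  rw [detour]
  set T := Tmap A B
  set R := Tmap C B
  have hTZ : T * ((msqrt C * (T - R) * T⁻¹)ᴴ * (msqrt C * (T - R) * T⁻¹))
      = (T - R) * C * (T - R) * T⁻¹ := by
    rw [conjTranspose_mul, conjTranspose_mul, conjTranspose_nonsing_inv, conjTranspose_sub, hT,
      hR, hs]
    simp only [Matrix.mul_assoc, mul_nonsing_inv_cancel_left _ _ hTu]
    rw [← Matrix.mul_assoc (msqrt C) (msqrt C), hs2]
  have hexpand : (T - R) * C * (T - R) * T⁻¹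
      = T * C - T * C * R * T⁻¹ - R * C + R * C * R * T⁻¹ := by
    simp only [Matrix.sub_mul, Matrix.mul_sub, mul_nonsing_inv_cancel_right _ _ hTu]
    abel
  have h1 : (T * C * R * T⁻¹).trace = (C * R).trace := by
    rw [trace_mul_comm]
    simp only [Matrix.mul_assoc, nonsing_inv_mul_cancel_left _ _ hTu]
  have h2 : (R * C * R * T⁻¹).trace = (A * T).trace := by
    rw [hRCR, ← hTAT, mul_nonsing_inv_cancel_right _ _ hTu, trace_mul_comm]
  rw [hTZ, hexpand, trace_add, trace_sub, trace_sub, h1, h2, trace_mul_comm T,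
    trace_mul_comm R]
  ring

/-- `1 - T_{A→B}` is the gradient of `W₂²(·, B) / 2` at `A`; the
quadratic margin comes from `T_{A→B} ⪰ α`. -/
theorem W2sq_add_trace_add_le {A B C : Mat} (hA : A.PosDef) (hB : B.PosDef) (hC : C.PosDef)
    {α : ℝ} (hα : 0 ≤ α) (hTα : (Tmap A B - α • 1).PosSemidef) :
    W2sq A B + ((C - A) * (1 - Tmap A B)).trace + α * W2sq C A ≤ W2sq C B := by
  set Z := detour A B C
  have hmargin : α * (Zᴴ * Z).trace ≤ (Tmap A B * (Zᴴ * Z)).trace := by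
    have := (hTα.mul_mul_conjTranspose_same Z).trace_nonneg
    rw [Matrix.mul_sub, Matrix.sub_mul, trace_sub, Matrix.mul_smul, Matrix.mul_one,
      Matrix.smul_mul, trace_smul, smul_eq_mul, trace_mul_cycle, trace_mul_comm (Zᴴ * Z),
      trace_mul_comm Z] at this
    linarith
  have hlinear : ((C - A) * (1 - Tmap A B)).trace
      = C.trace - (C * Tmap A B).trace - A.trace + (A * Tmap A B).trace := by
    rw [Matrix.sub_mul, Matrix.mul_sub, Matrix.mul_sub, Matrix.mul_one, Matrix.mul_one,
      trace_sub, trace_sub, trace_sub]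
    ring
  rw [W2sq_eq hA, W2sq_eq hC B, hlinear]
  rw [trace_Tmap_mul_detour hA hB hC] at hmargin
  linarith [mul_le_mul_of_nonneg_left (W2sq_le_trace_detour hA hB hC) hα]

theorem eq_zero_of_trace_mul_mul_eq_zero {S E : Mat} (hS : S.PosDef) (hE : E.IsHermitian)
    (h : (E * S * E).trace = 0) : E = 0 := by
  have hs := (msqrt_posDef hS).isUnit_det
  have hfactor : E * S * E = (E * msqrt S) * (E * msqrt S)ᴴ := by
    rw [conjTranspose_mul, (msqrt_posDef hS).isHermitian.eq, hE.eq]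
    conv_lhs => rw [← msqrt_mul_self hS.posSemidef]
    simp only [Matrix.mul_assoc]
  rw [hfactor, trace_mul_conjTranspose_self_eq_zero_iff] at h
  simpa only [Matrix.zero_mul, mul_nonsing_inv_cancel_right _ _ hs] using
    congrArg (· * (msqrt S)⁻¹) h

theorem dotProduct_mulVec_Tmap_sq_le {A B : Mat} (hA : A.PosDef) (hB : B.PosDef)
    (x : Fin d → ℝ) :
    (x ⬝ᵥ (A *ᵥ (Tmap A B *ᵥ x))) ^ 2 ≤ (x ⬝ᵥ (A *ᵥ x)) * (x ⬝ᵥ (B *ᵥ x)) := by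
  have hTAT : (Tmap A B *ᵥ x) ⬝ᵥ (A *ᵥ (Tmap A B *ᵥ x)) = x ⬝ᵥ (B *ᵥ x) := by
    rw [(Tmap_posDef hA hB).isHermitian.mulVec_dotProduct, mulVec_mulVec, mulVec_mulVec,
      Tmap_mul_mul_Tmap hA hB]
  simpa only [hTAT] using hA.posSemidef.dotProduct_mulVec_sq_le x (Tmap A B *ᵥ x)

theorem normAtSq_nonneg {G S : Mat} (hG : G.IsHermitian) (hS : S.PosSemidef) :
    0 ≤ normAtSq G S := by
  simpa only [normAtSq, hG.eq] using (hS.mul_mul_conjTranspose_same G).trace_nonneg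

theorem normAtSq_le_div_mul {G S S' : Mat} (hG : G.IsHermitian) {l u : ℝ} (hl : 0 < l)
    (hu : 0 ≤ u) (hS : (S - l • 1).PosSemidef) (hS' : (u • 1 - S').PosSemidef) :
    normAtSq G S' ≤ u / l * normAtSq G S := by
  have hupper := normAtSq_nonneg hG hS'
  have hlower := normAtSq_nonneg hG hS
  simp only [normAtSq, Matrix.mul_sub, Matrix.sub_mul, Matrix.mul_smul, Matrix.smul_mul,
    Matrix.mul_one, trace_sub, trace_smul, smul_eq_mul, sub_nonneg] at hupper hlower ⊢
  rw [div_mul_eq_mul_div, le_div_iff₀ hl]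
  nlinarith [mul_le_mul_of_nonneg_left hlower hu]

/-- Split `Σ - Σ' = (1 - T) Σ + T Σ (1 - T)` with `T = T_{Σ→Σ'}` and apply Cauchy–Schwarz for
the `Σ`-weighted trace inner product to each piece. -/
theorem trace_sub_mul_le {S S' G : Mat} (hS : S.PosDef) (hS' : S'.PosDef) (hG : G.IsHermitian)
    {c : ℝ} (hc : 0 ≤ c) (hGS' : normAtSq G S' ≤ c ^ 2 * normAtSq G S) :
    ((S - S') * G).trace ≤ (1 + c) * √(W2sq S S') * √(normAtSq G S) := by
  have hTST := Tmap_mul_mul_Tmap hS hS'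
  have hT : (Tmap S S')ᴴ = Tmap S S' := (Tmap_posDef hS hS').isHermitian.eq
  have hW := W2sq_eq_trace_one_sub_Tmap hS hS'
  have hW0 := W2sq_nonneg hS hS'
  set T := Tmap S S'
  have h1T : (1 - T)ᴴ = 1 - T := by rw [conjTranspose_sub, conjTranspose_one, hT]
  have hsplit : ((S - S') * G).trace = ((1 - T) * S * G).trace + (G * T * S * (1 - T)).trace := by
    have : (S - T * S * T) * G = (1 - T) * S * G + T * S * (1 - T) * G := by noncomm_ring
    rw [← hTST, this, trace_add, trace_mul_comm (T * S * (1 - T)) G]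
    simp only [Matrix.mul_assoc]
  have hfirst : ((1 - T) * S * G).trace ≤ √(W2sq S S') * √(normAtSq G S) := by
    have := hS.posSemidef.trace_mul_mul_conjTranspose_sq_le (1 - T) G
    rw [hG.eq, h1T, ← hW] at this
    rw [← Real.sqrt_mul hW0]
    exact (le_abs_self _).trans (Real.abs_le_sqrt this)
  have hsecond : (G * T * S * (1 - T)).trace ≤ c * √(W2sq S S') * √(normAtSq G S) := by
    have := hS.posSemidef.trace_mul_mul_conjTranspose_sq_le (G * T) (1 - T)
    have hGS'G : G * T * S * (G * T)ᴴ = G * S' * G := by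
      rw [conjTranspose_mul, hT, hG.eq, ← hTST]
      simp only [Matrix.mul_assoc]
    rw [h1T, hGS'G, ← hW] at this
    have hbound : normAtSq G S' * W2sq S S' ≤ (c * √(W2sq S S') * √(normAtSq G S)) ^ 2 := by
      rw [mul_pow, mul_pow, Real.sq_sqrt hW0, Real.sq_sqrt (normAtSq_nonneg hG hS.posSemidef)]
      nlinarith [mul_le_mul_of_nonneg_right hGS' hW0]
    exact (abs_le_of_sq_le_sq' (this.trans hbound) (by positivity)).2
  rw [hsplit]
  linarith

section Barycenter

variable {N : ℕ} (Ss : Fin N → Matrix (Fin d) (Fin d) ℝ)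

theorem sum_one_sub_Tmap (S : Mat) : ∑ i, (1 - Tmap S (Ss i)) = (N : ℝ) • gradF Ss S := by
  rcases eq_or_ne N 0 with rfl | hN
  · simp
  rw [gradF, smul_sub, smul_smul, mul_inv_cancel₀ (Nat.cast_ne_zero.mpr hN), one_smul,
    Finset.sum_sub_distrib, Finset.sum_const, Finset.card_univ, Fintype.card_fin,
    Nat.cast_smul_eq_nsmul]

variable {Ss}

theorem gradF_isHermitian {S : Mat} (hS : S.PosDef) (hSs : ∀ i, (Ss i).PosDef) :
    (gradF Ss S).IsHermitian := by
  rw [gradF, IsHermitian, conjTranspose_sub, conjTranspose_one, conjTranspose_smul, star_trivial,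
    conjTranspose_sum]
  simp only [(Tmap_posDef hS (hSs _)).isHermitian.eq]

theorem Fbar_add_trace_add_le (hN : 0 < N) (hSs : ∀ i, (Ss i).PosDef) {A C : Mat}
    (hA : A.PosDef) (hC : C.PosDef) {α : ℝ} (hα : 0 ≤ α)
    (hTα : ∀ i, (Tmap A (Ss i) - α • 1).PosSemidef) :
    Fbar Ss A + ((C - A) * gradF Ss A).trace / 2 + α / 2 * W2sq C A ≤ Fbar Ss C := by
  have hsum := Finset.sum_le_sum fun i (_ : i ∈ Finset.univ) =>
    W2sq_add_trace_add_le hA (hSs i) hC hα (hTα i)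
  rw [Finset.sum_add_distrib, Finset.sum_add_distrib, ← trace_sum, ← Finset.mul_sum,
    sum_one_sub_Tmap, Finset.sum_const, Finset.card_univ, Fintype.card_fin, nsmul_eq_mul,
    Matrix.mul_smul, trace_smul, smul_eq_mul] at hsum
  have hN' : (0 : ℝ) < N := Nat.cast_pos.mpr hN
  unfold Fbar
  field_simp
  linarith

/-- Moving `Σ⋆` to `X Σ⋆ X` with `X = 1 - ε ∇F(Σ⋆)` changes `F` by at most
`-ε (2 - ε) ‖∇F(Σ⋆)‖²_{Σ⋆} / 2`. -/
theorem gradF_eq_zero_of_isMin (hN : 0 < N) (hSs : ∀ i, (Ss i).PosDef) {Sstar : Mat}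
    (hstar : Sstar.PosDef) (hmin : ∀ S : Mat, S.PosDef → Fbar Ss Sstar ≤ Fbar Ss S) :
    gradF Ss Sstar = 0 := by
  set E := gradF Ss Sstar with hEdef
  have hE : E.IsHermitian := gradF_isHermitian hstar hSs
  obtain ⟨ε, hε0, hε1, hX⟩ := exists_pos_lt_one_isUnit_one_sub_smul E
  have hXSX : ((1 - ε • E) * Sstar * (1 - ε • E)).PosDef := by
    simpa only [star_eq_conjTranspose, (isHermitian_one.sub (hE.smul (star_trivial ε))).eq] using
      (IsUnit.posDef_star_left_conjugate_iff hX).mpr hstar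
  have hsum := Finset.sum_le_sum fun i (_ : i ∈ Finset.univ) =>
    W2sq_one_sub_smul_mul_mul_le hstar (hSs i) hE hXSX
  rw [Finset.sum_add_distrib, Finset.sum_sub_distrib, ← Finset.mul_sum, ← trace_sum,
    ← Matrix.mul_sum, sum_one_sub_Tmap, Finset.sum_const, Finset.card_univ, Fintype.card_fin,
    nsmul_eq_mul, Matrix.mul_smul, trace_smul, smul_eq_mul, ← hEdef] at hsum
  have hN' : (0 : ℝ) < N := Nat.cast_pos.mpr hN
  have hle : ∑ i, W2sq Sstar (Ss i) ≤ ∑ i, W2sq ((1 - ε • E) * Sstar * (1 - ε • E)) (Ss i) :=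
    le_of_mul_le_mul_left (hmin _ hXSX) (by positivity)
  have hτ : N * ε * (2 - ε) * (E * Sstar * E).trace ≤ N * ε * (2 - ε) * 0 := by
    nlinarith [hle.trans hsum]
  have hτ0 : 0 ≤ (E * Sstar * E).trace := by
    simpa only [hE.eq] using (hstar.posSemidef.mul_mul_conjTranspose_same E).trace_nonneg
  exact eq_zero_of_trace_mul_mul_eq_zero hstar hE
    (le_antisymm (le_of_mul_le_mul_left hτ (mul_pos (mul_pos hN' hε0) (by linarith))) hτ0)

/-- `N ⟪x, Σ⋆ x⟫ = ∑ᵢ ⟪x, Σ⋆ T_{Σ⋆→Σᵢ} x⟫`, and by Cauchy–Schwarz each term is at most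
`√(⟪x, Σ⋆ x⟫ ⟪x, Σᵢ x⟫)`. -/
theorem posSemidef_smul_one_sub_of_gradF_eq_zero (hN : 0 < N) (hSs : ∀ i, (Ss i).PosDef)
    {u : ℝ} (hSsu : ∀ i, (u • 1 - Ss i).PosSemidef) {Sstar : Mat} (hstar : Sstar.PosDef)
    (hgrad : gradF Ss Sstar = 0) : (u • 1 - Sstar).PosSemidef := by
  have hsumT : ∑ i, Tmap Sstar (Ss i) = (N : ℝ) • (1 : Mat) := by
    have := sum_one_sub_Tmap Ss Sstar
    rw [hgrad, smul_zero, Finset.sum_sub_distrib, sub_eq_zero, Finset.sum_const,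
      Finset.card_univ, Fintype.card_fin] at this
    rw [← this, Nat.cast_smul_eq_nsmul]
  refine posSemidef_smul_one_sub_of_dotProduct_mulVec_le hstar.isHermitian fun x => ?_
  set v := x ⬝ᵥ (Sstar *ᵥ x)
  have hsum : ∑ i, x ⬝ᵥ (Sstar *ᵥ (Tmap Sstar (Ss i) *ᵥ x)) = N * v := by
    simp only [← dotProduct_sum, ← mulVec_sum, ← sum_mulVec, hsumT, smul_mulVec, one_mulVec,
      mulVec_smul, dotProduct_smul, smul_eq_mul, v]
  have hv0 : 0 ≤ v := by simpa only [star_trivial] using hstar.posSemidef.dotProduct_mulVec_nonneg x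
  have hterm (i : Fin N) : (x ⬝ᵥ (Sstar *ᵥ (Tmap Sstar (Ss i) *ᵥ x))) ^ 2 ≤ v * (u * (x ⬝ᵥ x)) :=
    (dotProduct_mulVec_Tmap_sq_le hstar (hSs i) x).trans (mul_le_mul_of_nonneg_left
      (dotProduct_mulVec_le_of_posSemidef_smul_one_sub (hSsu i) x) hv0)
  have hux : 0 ≤ u * (x ⬝ᵥ x) := by
    have h0 : 0 ≤ x ⬝ᵥ (Ss ⟨0, hN⟩ *ᵥ x) := by
      simpa only [star_trivial] using (hSs ⟨0, hN⟩).posSemidef.dotProduct_mulVec_nonneg x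
    exact h0.trans (dotProduct_mulVec_le_of_posSemidef_smul_one_sub (hSsu _) x)
  have hN' : (0 : ℝ) < N := Nat.cast_pos.mpr hN
  have hsq : (N * v) ^ 2 ≤ N * (N * (v * (u * (x ⬝ᵥ x)))) := by
    rw [← hsum]
    refine sq_sum_le_card_mul_sum_sq.trans ?_
    rw [Finset.card_univ, Fintype.card_fin]
    refine mul_le_mul_of_nonneg_left ?_ hN'.le
    simpa using Finset.sum_le_sum fun i (_ : i ∈ Finset.univ) => hterm i
  have hv2 : v ^ 2 ≤ v * (u * (x ⬝ᵥ x)) :=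
    le_of_mul_le_mul_left (by linarith : (N : ℝ) ^ 2 * v ^ 2 ≤ N ^ 2 * (v * (u * (x ⬝ᵥ x))))
      (by positivity)
  nlinarith

end Barycenter

end BuresWasserstein

theorem le_two_mul_pow_three_mul_of_le {δ s W g q : ℝ} (hq : 1 ≤ q) (hW0 : 0 ≤ W) (hg : 0 ≤ g)
    (hgrowth : q⁻¹ / 2 * W ≤ δ) (hconvex : δ ≤ s / 2) (hs : s ≤ (1 + q) * √W * √g) :
    δ ≤ 2 * q ^ 3 * g := by
  rcases le_or_gt δ 0 with hδ | hδ
  · have : 0 ≤ 2 * q ^ 3 * g := by positivity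
    linarith
  have hq0 : 0 < q := one_pos.trans_le hq
  have hW : W ≤ 2 * q * δ := by
    have := mul_le_mul_of_nonneg_left hgrowth (by positivity : 0 ≤ 2 * q)
    rwa [← mul_assoc, show 2 * q * (q⁻¹ / 2) = 1 by field_simp, one_mul] at this
  have hδ' : δ ≤ q * √W * √g := by
    nlinarith [mul_nonneg (Real.sqrt_nonneg W) (Real.sqrt_nonneg g)]
  have hδ2 : δ ^ 2 ≤ q ^ 2 * W * g := by
    calc δ ^ 2 ≤ (q * √W * √g) ^ 2 := pow_le_pow_left₀ hδ.le hδ' 2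
      _ = q ^ 2 * W * g := by rw [mul_pow, mul_pow, Real.sq_sqrt hW0, Real.sq_sqrt hg]
  nlinarith [mul_le_mul_of_nonneg_left hW (by positivity : 0 ≤ q ^ 2 * g)]

/-- Polyak–Łojasiewicz inequality for the Bures–Wasserstein barycenter functional. -/
theorem PL_inequality {d N : ℕ} (l u : ℝ) (hl : 0 < l) (hlu : l ≤ u)
    (Ss : Fin N → Matrix (Fin d) (Fin d) ℝ) (hSs : ∀ i, Ss i ∈ Kset l u)
    (Sstar : Matrix (Fin d) (Fin d) ℝ) (hstar : Sstar.PosDef)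
    (hmin : ∀ S : Matrix (Fin d) (Fin d) ℝ, S.PosDef → Fbar Ss Sstar ≤ Fbar Ss S)
    (S : Matrix (Fin d) (Fin d) ℝ) (hS : S ∈ Kset l u) :
    Fbar Ss S - Fbar Ss Sstar ≤ 2 * (u / l) ^ ((3 : ℝ) / 2) * normAtSq (gradF Ss S) S := by
  obtain ⟨hSpd, hSl, -⟩ := hS
  have hSspd i := (hSs i).1
  have hG := gradF_isHermitian hSpd hSspd
  have hu : 0 < u := hl.trans_le hlu
  rw [Real.rpow_div_two_eq_sqrt _ (by positivity), Real.rpow_ofNat]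
  rcases N.eq_zero_or_pos with rfl | hN
  · simpa [Fbar] using mul_nonneg (by positivity : (0 : ℝ) ≤ 2 * √(u / l) ^ 3)
      (normAtSq_nonneg hG hSpd.posSemidef)
  have hgrad := gradF_eq_zero_of_isMin hN hSspd hstar hmin
  have hstar_u :=
    posSemidef_smul_one_sub_of_gradF_eq_zero hN hSspd (fun i => (hSs i).2.2) hstar hgrad
  have hgrowth := Fbar_add_trace_add_le hN hSspd hstar hSpd (Real.sqrt_nonneg (l / u)) fun i =>
    (Tmap_posDef hstar (hSspd i)).posSemidef_sub_sqrt_smul_one_of_mul_mul_eq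
      (Tmap_mul_mul_Tmap hstar (hSspd i)) hl hu hstar_u (hSs i).2.1
  have hconvex := Fbar_add_trace_add_le hN hSspd hSpd hstar le_rfl fun i => by
    simpa using (Tmap_posDef hSpd (hSspd i)).posSemidef
  have hslope := trace_sub_mul_le hSpd hstar hG (Real.sqrt_nonneg (u / l)) (by
    rw [Real.sq_sqrt (by positivity)]
    exact normAtSq_le_div_mul hG hl hu.le hSl hstar_u)
  rw [hgrad, Matrix.mul_zero, trace_zero, ← inv_div u l, Real.sqrt_inv] at hgrowth
  rw [← neg_sub S, Matrix.neg_mul, trace_neg] at hconvex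
  exact le_two_mul_pow_three_mul_of_le (Real.one_le_sqrt.mpr ((one_le_div hl).mpr hlu))
    (W2sq_nonneg hSpd hstar) (normAtSq_nonneg hG hSpd.posSemidef) (by linarith) (by linarith)
    hslope
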